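/- Let f : Ω → ℝ² be a continuously differentiable map on an open set Ω ⊆ ℝ², and let S = {x ∈ Ω : det Df(x) = 0} be its critical set. Then f(S) has Lebesgue measure zero in ℝ². -/

import Mathlib

open MeasureTheory

/-- Sard's theorem in the equidimensional case n = 2: the image of the
critical set of a C¹ map f : Ω → ℝ², Ω ⊆ ℝ² open, has Lebesgue measure zero. -/
theorem sard_dim_two (Ω : Set (ℝ × ℝ)) (hΩ : IsOpen Ω)
    (f : ℝ × ℝ → ℝ × ℝ) (hf : ContDiffOn ℝ 1 f Ω) :
    volume (f '' {x ∈ Ω | LinearMap.det ((fderiv ℝ f x : ℝ × ℝ →L[ℝ] ℝ × ℝ) :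
      ℝ × ℝ →ₗ[ℝ] ℝ × ℝ) = 0}) = 0 := by
  refine addHaar_image_eq_zero_of_det_fderivWithin_eq_zero volume
    (f' := fun x => fderiv ℝ f x) (fun x hx => ?_) (fun x hx => hx.2)
  have hfx : DifferentiableAt ℝ f x :=
    (hf.contDiffAt (hΩ.mem_nhds hx.1)).differentiableAt one_ne_zero
  exact hfx.hasFDerivAt.hasFDerivWithinAt
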